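/- arXiv:2409.07213 — 3 statements merged into one kernel-verified Lean document; each statement's English description precedes it below -/
import Mathlib

section
/- Let A, B ∈ S^n with A ≠ B. Then the inclusion {x ∈ ℝ^n : xᵀBx ≥ 0} ⊆ {x ∈ ℝ^n : xᵀAx ≥ 0} holds if and only if J_+(B) ⊆ J_+(A), where J_+(C) = {X ∈ S^n_+ : ⟨C,X⟩ ≥ 0}. -/
open Matrix

/-- J_+(C) = {X ∈ S^n_+ : ⟨C,X⟩ ≥ 0}. -/
def Jp {n : ℕ} (C : Matrix (Fin n) (Fin n) ℝ) : Set (Matrix (Fin n) (Fin n) ℝ) :=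
  {X | X.PosSemidef ∧ 0 ≤ (C * X).trace}

/-!
Every PSD matrix is a sum of rank-one matrices `v vᵀ`, so `⟨B, X⟩ = ∑ vᵢᵀ B vᵢ`. By Dines'
convexity argument two vectors `x, y` can be merged into one vector `z` with
`Q z = Q x + Q y` and `P z ≤ P x + P y` for any two quadratic forms `Q, P`: rotating the pair
`(x, y)` keeps `Q x + Q y` fixed, and by the intermediate value theorem some rotation
splits it evenly. Merging all the `vᵢ` turns `⟨B, X⟩ ≥ 0` into `zᵀ B z ≥ 0`, hence
`0 ≤ zᵀ A z ≤ ⟨A, X⟩`. The converse direction tests on `X = x xᵀ`.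
-/

namespace QuadraticMap

variable {V : Type*} [AddCommGroup V] [Module ℝ V]

theorem apply_smul_add_smul (Q : QuadraticForm ℝ V) (a b : ℝ) (x y : V) :
    Q (a • x + b • y) = a ^ 2 * Q x + a * b * polar Q x y + b ^ 2 * Q y := by
  rw [QuadraticMap.map_add Q, QuadraticMap.map_smul, QuadraticMap.map_smul, polar_smul_left, polar_smul_right]
  simp only [smul_eq_mul]
  ring

theorem exists_eq_add_and_le_add (Q P : QuadraticForm ℝ V) (x y : V) :
    ∃ z, Q z = Q x + Q y ∧ P z ≤ P x + P y := by
  set u : ℝ → V := fun θ => Real.cos θ • x + Real.sin θ • y with hu_def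
  have hu : ∀ θ, u (θ + Real.pi / 2) = -Real.sin θ • x + Real.cos θ • y := by
    intro θ
    simp [u, Real.cos_add_pi_div_two, Real.sin_add_pi_div_two]
  have hsum : ∀ (R : QuadraticForm ℝ V) θ, R (u θ) + R (u (θ + Real.pi / 2)) = R x + R y := by
    intro R θ
    rw [hu, hu_def]
    simp only [apply_smul_add_smul]
    linear_combination (R x + R y) * Real.sin_sq_add_cos_sq θ
  set f : ℝ → ℝ := fun θ => Q (u θ) - Q (u (θ + Real.pi / 2))
  have hf : Continuous f := by
    simp only [f, hu_def, apply_smul_add_smul]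
    fun_prop
  have hf0 : f 0 = Q x - Q y := by simp [f, u]
  have hfpi : f (Real.pi / 2) = -(Q x - Q y) := by
    simp [f, hu, u]
  obtain ⟨θ, -, hθ⟩ : 0 ∈ f '' Set.uIcc 0 (Real.pi / 2) := by
    refine intermediate_value_uIcc hf.continuousOn ?_
    rw [hf0, hfpi, Set.mem_uIcc]
    rcases le_total 0 (Q x - Q y) with h | h
    · exact Or.inr ⟨by linarith, h⟩
    · exact Or.inl ⟨h, by linarith⟩
  have hQ := hsum Q θ
  have hP := hsum P θ
  obtain ⟨w, hwQ, hwP⟩ : ∃ w, 2 * Q w = Q x + Q y ∧ 2 * P w ≤ P x + P y := by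
    rcases le_total (P (u θ)) (P (u (θ + Real.pi / 2))) with h | h
    · exact ⟨u θ, by linarith, by linarith⟩
    · exact ⟨u (θ + Real.pi / 2), by linarith, by linarith⟩
  have h2 : √2 * √2 = 2 := Real.mul_self_sqrt zero_le_two
  refine ⟨√2 • w, ?_, ?_⟩ <;> rw [QuadraticMap.map_smul, h2, smul_eq_mul] <;> linarith

theorem exists_eq_sum_and_le_sum (Q P : QuadraticForm ℝ V) {ι : Type*} (s : Finset ι)
    (v : ι → V) : ∃ z, Q z = ∑ i ∈ s, Q (v i) ∧ P z ≤ ∑ i ∈ s, P (v i) := by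
  classical
  induction s using Finset.induction_on with
  | empty => exact ⟨0, by simp, by simp⟩
  | insert i s hi ih =>
    obtain ⟨z, hzQ, hzP⟩ := ih
    obtain ⟨z', hz'Q, hz'P⟩ := exists_eq_add_and_le_add Q P (v i) z
    refine ⟨z', ?_, ?_⟩ <;> rw [Finset.sum_insert hi]
    · rw [hz'Q, hzQ]
    · linarith

end QuadraticMap

namespace Matrix

variable {n : Type*} [Fintype n]

theorem trace_mul_vecMulVec {R : Type*} [CommSemiring R] (M : Matrix n n R) (x y : n → R) :
    (M * vecMulVec x y).trace = y ⬝ᵥ M *ᵥ x := by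
  rw [mul_vecMulVec, trace_vecMulVec, dotProduct_comm]

theorem PosSemidef.exists_dotProduct_mulVec_eq_trace_mul_and_le [DecidableEq n]
    {X : Matrix n n ℝ} (hX : X.PosSemidef) (A B : Matrix n n ℝ) :
    ∃ z, z ⬝ᵥ B *ᵥ z = (B * X).trace ∧ z ⬝ᵥ A *ᵥ z ≤ (A * X).trace := by
  obtain ⟨m, v, rfl⟩ := posSemidef_iff_eq_sum_vecMulVec.mp hX
  simpa [Matrix.mul_sum, trace_sum, trace_mul_vecMulVec, toQuadraticForm', toLinearMap₂'_apply']
    using QuadraticMap.exists_eq_sum_and_le_sum B.toQuadraticForm' A.toQuadraticForm' Finset.univ v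

end Matrix

theorem stmt5_general {n : ℕ} (A B : Matrix (Fin n) (Fin n) ℝ) :
    ({x : Fin n → ℝ | 0 ≤ x ⬝ᵥ B.mulVec x} ⊆ {x : Fin n → ℝ | 0 ≤ x ⬝ᵥ A.mulVec x})
      ↔ Jp B ⊆ Jp A := by
  constructor
  · rintro h X ⟨hX, hBX⟩
    obtain ⟨z, hzB, hzA⟩ := hX.exists_dotProduct_mulVec_eq_trace_mul_and_le A B
    exact ⟨hX, (h (hzB ▸ hBX : 0 ≤ z ⬝ᵥ B *ᵥ z)).trans hzA⟩
  · intro h x hx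
    have hxx : (vecMulVec x x).PosSemidef := by
      simpa using posSemidef_vecMulVec_self_star x
    have := (h ⟨hxx, by rwa [trace_mul_vecMulVec]⟩).2
    rwa [trace_mul_vecMulVec] at this

theorem stmt5 {n : ℕ} (A B : Matrix (Fin n) (Fin n) ℝ)
    (hA : A.IsSymm) (hB : B.IsSymm) (hAB : A ≠ B) :
    ({x : Fin n → ℝ | 0 ≤ x ⬝ᵥ B.mulVec x} ⊆ {x : Fin n → ℝ | 0 ≤ x ⬝ᵥ A.mulVec x})
      ↔ Jp B ⊆ Jp A :=
  stmt5_general A B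
end

section
/- Let A, B ∈ S^n with A ≠ B. If J_-(B) ⊆ J_+(A), then J_0(B) ⊆ J_+(A). Moreover, if additionally J_+(B) ⊄ J_+(A) (i.e., J_+(B) is not contained in J_+(A)), then J_0(B) ⊆ J_+(A) implies J_-(B) ⊆ J_+(A), so the two inclusions are equivalent. -/
open Matrix

/-- J_-(C) = {X ∈ S^n_+ : ⟨C,X⟩ ≤ 0}. -/
def Jm {n : ℕ} (C : Matrix (Fin n) (Fin n) ℝ) : Set (Matrix (Fin n) (Fin n) ℝ) :=
  {X | X.PosSemidef ∧ (C * X).trace ≤ 0}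

/-- J_0(C) = {X ∈ S^n_+ : ⟨C,X⟩ = 0}. -/
def J0 {n : ℕ} (C : Matrix (Fin n) (Fin n) ℝ) : Set (Matrix (Fin n) (Fin n) ℝ) :=
  {X | X.PosSemidef ∧ (C * X).trace = 0}

/-
`J₀(B) ⊆ J₋(B)` gives the first inclusion. For the converse, take `Y ⪰ 0` with
`⟨B,Y⟩ ≥ 0 > ⟨A,Y⟩`; since `J₀(B) ⊆ J₊(A)`, in fact `⟨B,Y⟩ > 0`. Any `X ∈ J₋(B)` can be pushed
onto the hyperplane `⟨B,·⟩ = 0` inside the PSD cone as `X + tY` with `t ≥ 0`, and then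
`0 ≤ ⟨A, X + tY⟩ = ⟨A,X⟩ + t⟨A,Y⟩ ≤ ⟨A,X⟩`.
-/

lemma J0_subset_Jm {n : ℕ} (C : Matrix (Fin n) (Fin n) ℝ) : J0 C ⊆ Jm C :=
  fun _ hX => ⟨hX.1, hX.2.le⟩

lemma trace_mul_add_smul {m R : Type*} [Fintype m] [CommSemiring R]
    (C X Y : Matrix m m R) (t : R) :
    (C * (X + t • Y)).trace = (C * X).trace + t * (C * Y).trace := by
  rw [mul_add, trace_add, Matrix.mul_smul, trace_smul, smul_eq_mul]

lemma add_smul_mem_J0 {n : ℕ} {B X Y : Matrix (Fin n) (Fin n) ℝ} (hX : X ∈ Jm B)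
    (hY : Y.PosSemidef) (hBY : 0 < (B * Y).trace) :
    X + (-(B * X).trace / (B * Y).trace) • Y ∈ J0 B := by
  refine ⟨hX.1.add (hY.smul (div_nonneg (neg_nonneg.mpr hX.2) hBY.le)), ?_⟩
  rw [trace_mul_add_smul, div_mul_cancel₀ _ hBY.ne']
  ring

lemma Jm_subset_Jp_of_J0_subset_Jp {n : ℕ} {A B Y : Matrix (Fin n) (Fin n) ℝ}
    (h0 : J0 B ⊆ Jp A) (hYB : Y ∈ Jp B) (hYA : Y ∉ Jp A) : Jm B ⊆ Jp A := by
  have hAY : (A * Y).trace < 0 := lt_of_not_ge fun h => hYA ⟨hYB.1, h⟩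
  have hBY : 0 < (B * Y).trace :=
    hYB.2.lt_of_ne fun h => (h0 ⟨hYB.1, h.symm⟩).2.not_gt hAY
  intro X hX
  have hZ := (h0 (add_smul_mem_J0 hX hYB.1 hBY)).2
  rw [trace_mul_add_smul] at hZ
  have ht : 0 ≤ -(B * X).trace / (B * Y).trace := div_nonneg (neg_nonneg.mpr hX.2) hBY.le
  exact ⟨hX.1, by linarith [mul_nonpos_of_nonneg_of_nonpos ht hAY.le]⟩

theorem stmt7_general {n : ℕ} (A B : Matrix (Fin n) (Fin n) ℝ) :
    (Jm B ⊆ Jp A → J0 B ⊆ Jp A) ∧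
    (¬ (Jp B ⊆ Jp A) → (J0 B ⊆ Jp A ↔ Jm B ⊆ Jp A)) := by
  refine ⟨(J0_subset_Jm B).trans, fun hBA => ⟨fun h0 => ?_, (J0_subset_Jm B).trans⟩⟩
  obtain ⟨Y, hYB, hYA⟩ := Set.not_subset.mp hBA
  exact Jm_subset_Jp_of_J0_subset_Jp h0 hYB hYA

theorem stmt7 {n : ℕ} (A B : Matrix (Fin n) (Fin n) ℝ)
    (hA : A.IsSymm) (hB : B.IsSymm) (hAB : A ≠ B) :
    (Jm B ⊆ Jp A → J0 B ⊆ Jp A) ∧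
    (¬ (Jp B ⊆ Jp A) → (J0 B ⊆ Jp A ↔ Jm B ⊆ Jp A)) :=
  stmt7_general A B
end

section
/- Let B ⊆ S^n satisfy: (A-3) there exists a positive definite matrix in J_+(B); (A-4) no element of B is positive semidefinite unless B = {0}; (A-5) for all distinct A, B ∈ B, J_+(B) ⊄ J_+(A). Then for distinct A, B ∈ B, the following are equivalent: (i) J_0(B) ⊆ J_+(A); (ii) J_-(B) ⊆ J_+(A); (iii) αA + βB ∈ S^n_+ for some α > 0, β > 0; (iv) αA + βB ∈ S^n_+ for some (α,β) ≠ (0,0). -/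
/-!
Pairing with a positive semidefinite `X` maps `S^n_+` onto a convex cone of points
`(⟨A,X⟩, ⟨B,X⟩)` in the plane, and by self-duality of `S^n_+`, `αA + βB` is positive semidefinite
exactly when `α a + β b ≥ 0` on that cone. Condition (i) says the cone meets the line `b = 0`
only where `a ≥ 0`; as (A-5) provides points of the cone on both sides of that line, a
one-dimensional separation yields `β` with `a + β b ≥ 0` on the cone, and (A-5) forces `β > 0`.
In (iv) with `α, β ≤ 0`, testing against the positive definite matrix of (A-3) gives
`αA + βB = 0`, so `(-α, -β)` works as well.
-/

open Matrix

/-- J_+(𝓑) = ⋂_{B ∈ 𝓑} J_+(B). -/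
def JpFam {n : ℕ} (𝓑 : Set (Matrix (Fin n) (Fin n) ℝ)) : Set (Matrix (Fin n) (Fin n) ℝ) :=
  {X | X.PosSemidef ∧ ∀ B ∈ 𝓑, 0 ≤ (B * X).trace}

theorem ConvexCone.exists_forall_nonneg_add_mul {E : Type*} [AddCommGroup E] [Module ℝ E]
    (K : ConvexCone ℝ E) (f g : E →ₗ[ℝ] ℝ) (hker : ∀ x ∈ K, g x = 0 → 0 ≤ f x)
    {x₁ x₂ : E} (hx₁ : x₁ ∈ K) (hg₁ : 0 < g x₁) (hx₂ : x₂ ∈ K) (hg₂ : g x₂ < 0) :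
    ∃ β : ℝ, ∀ x ∈ K, 0 ≤ f x + β * g x := by
  have key : ∀ x ∈ K, ∀ y ∈ K, 0 < g x → g y < 0 → -f x / g x ≤ f y / -g y := by
    intro x hx y hy hgx hgy
    have hz := hker _ (K.add_mem (K.smul_mem (neg_pos.2 hgy) hx) (K.smul_mem hgx hy))
      (by simp only [map_add, map_smul, smul_eq_mul]; ring)
    simp only [map_add, map_smul, smul_eq_mul] at hz
    rw [div_le_div_iff₀ hgx (neg_pos.2 hgy)]
    linarith
  set S := (fun x => -f x / g x) '' {x | x ∈ K ∧ 0 < g x}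
  have hS : S.Nonempty := ⟨_, x₁, ⟨hx₁, hg₁⟩, rfl⟩
  have hbdd : BddAbove S := by
    refine ⟨f x₂ / -g x₂, ?_⟩
    rintro _ ⟨x, ⟨hx, hgx⟩, rfl⟩
    exact key x hx x₂ hx₂ hgx hg₂
  refine ⟨sSup S, fun x hx => ?_⟩
  rcases lt_trichotomy (g x) 0 with hgx | hgx | hgx
  · have h : sSup S ≤ f x / -g x := by
      refine csSup_le hS ?_
      rintro _ ⟨y, ⟨hy, hgy⟩, rfl⟩
      exact key y hy x hx hgy hgx
    rw [le_div_iff₀ (neg_pos.2 hgx)] at h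
    linarith
  · simpa [hgx] using hker x hx hgx
  · have h : -f x / g x ≤ sSup S := le_csSup hbdd ⟨x, ⟨hx, hgx⟩, rfl⟩
    rw [div_le_iff₀ hgx] at h
    linarith

namespace Matrix

variable {ι : Type*} [Fintype ι]

theorem trace_smul_add_smul_mul (α β : ℝ) (A B X : Matrix ι ι ℝ) :
    ((α • A + β • B) * X).trace = α * (A * X).trace + β * (B * X).trace := by
  simp only [Matrix.add_mul, Matrix.smul_mul, trace_add, trace_smul, smul_eq_mul]

def posSemidefCone : ConvexCone ℝ (Matrix ι ι ℝ) where
  carrier := {X | X.PosSemidef}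
  smul_mem' _ hc _ hX := hX.smul hc.le
  add_mem' _ hX _ hY := hX.add hY

open scoped MatrixOrder in
theorem PosSemidef.exists_eq_conjTranspose_mul_self {X : Matrix ι ι ℝ} (hX : X.PosSemidef) :
    ∃ C : Matrix ι ι ℝ, X = Cᴴ * C := by
  classical
  exact CStarAlgebra.nonneg_iff_eq_star_mul_self.mp hX.nonneg

theorem PosSemidef.trace_mul_nonneg {M X : Matrix ι ι ℝ} (hM : M.PosSemidef)
    (hX : X.PosSemidef) : 0 ≤ (M * X).trace := by
  obtain ⟨C, rfl⟩ := hX.exists_eq_conjTranspose_mul_self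
  rw [← Matrix.mul_assoc, trace_mul_cycle]
  exact (hM.mul_mul_conjTranspose_same C).trace_nonneg

theorem PosSemidef.eq_zero_of_trace_mul_posDef {M X : Matrix ι ι ℝ}
    (hM : M.PosSemidef) (hX : X.PosDef) (h : (M * X).trace = 0) : M = 0 := by
  classical
  obtain ⟨C, rfl⟩ := hX.posSemidef.exists_eq_conjTranspose_mul_self
  have hC : IsUnit C := by
    have := (isUnit_iff_isUnit_det _).mp hX.isUnit
    rw [det_mul] at this
    exact (isUnit_iff_isUnit_det C).mpr (isUnit_of_mul_isUnit_right this)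
  rw [← Matrix.mul_assoc, trace_mul_cycle,
    (hM.mul_mul_conjTranspose_same C).trace_eq_zero_iff, Matrix.mul_assoc,
    hC.mul_right_eq_zero, (show IsUnit Cᴴ from hC.star).mul_left_eq_zero] at h
  exact h

theorem posSemidef_iff_forall_trace_mul_nonneg {M : Matrix ι ι ℝ} (hM : M.IsHermitian) :
    M.PosSemidef ↔ ∀ X : Matrix ι ι ℝ, X.PosSemidef → 0 ≤ (M * X).trace := by
  refine ⟨fun h X hX => h.trace_mul_nonneg hX, fun h => ?_⟩
  refine PosSemidef.of_dotProduct_mulVec_nonneg hM fun x => ?_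
  have := h _ (posSemidef_vecMulVec_self_star x)
  rwa [mul_vecMulVec, trace_vecMulVec, dotProduct_comm] at this

end Matrix

section

variable {n : ℕ} {A B : Matrix (Fin n) (Fin n) ℝ} {α β : ℝ}

theorem Jp_subset_Jp_of_posSemidef (hM : (α • A + β • B).PosSemidef) (hα : 0 < α)
    (hβ : β ≤ 0) : Jp B ⊆ Jp A := by
  rintro X ⟨hX, hb⟩
  have h := hM.trace_mul_nonneg hX
  rw [trace_smul_add_smul_mul] at h
  exact ⟨hX, (mul_nonneg_iff_of_pos_left hα).mp (by nlinarith)⟩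

theorem Jm_subset_Jp_of_posSemidef (hM : (α • A + β • B).PosSemidef) (hα : 0 < α)
    (hβ : 0 ≤ β) : Jm B ⊆ Jp A := by
  rintro X ⟨hX, hb⟩
  have h := hM.trace_mul_nonneg hX
  rw [trace_smul_add_smul_mul] at h
  exact ⟨hX, (mul_nonneg_iff_of_pos_left hα).mp (by nlinarith)⟩

theorem pos_and_pos_of_posSemidef (hBA : ¬ Jp B ⊆ Jp A) (hAB : ¬ Jp A ⊆ Jp B)
    (hM : (α • A + β • B).PosSemidef) (h : 0 < α ∨ 0 < β) : 0 < α ∧ 0 < β := by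
  rcases h with hα | hβ
  · exact ⟨hα, lt_of_not_ge fun hβ => hBA (Jp_subset_Jp_of_posSemidef hM hα hβ)⟩
  · refine ⟨lt_of_not_ge fun hα => hAB ?_, hβ⟩
    exact Jp_subset_Jp_of_posSemidef (add_comm (α • A) (β • B) ▸ hM) hβ hα

theorem exists_posSemidef_of_J0_subset_Jp (hA : A.IsSymm) (hB : B.IsSymm)
    (hBA : ¬ Jp B ⊆ Jp A) (hAB : ¬ Jp A ⊆ Jp B) (h : J0 B ⊆ Jp A) :
    ∃ α β : ℝ, 0 < α ∧ 0 < β ∧ (α • A + β • B).PosSemidef := by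
  obtain ⟨X₁, ⟨hX₁, hb₁⟩, hX₁A⟩ := Set.not_subset.mp hBA
  obtain ⟨X₂, ⟨hX₂, -⟩, hX₂B⟩ := Set.not_subset.mp hAB
  have hb₁ : 0 < (B * X₁).trace :=
    hb₁.lt_of_ne fun h0 => hX₁A (h ⟨hX₁, h0.symm⟩)
  have hb₂ : (B * X₂).trace < 0 := lt_of_not_ge fun hb => hX₂B ⟨hX₂, hb⟩
  obtain ⟨β, hβ⟩ := posSemidefCone.exists_forall_nonneg_add_mul
    ((traceLinearMap _ ℝ ℝ).comp (LinearMap.mulLeft ℝ A))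
    ((traceLinearMap _ ℝ ℝ).comp (LinearMap.mulLeft ℝ B))
    (fun X hX hb => (h ⟨hX, hb⟩).2) hX₁ hb₁ hX₂ hb₂
  have hM : ((1 : ℝ) • A + β • B).PosSemidef := by
    refine (posSemidef_iff_forall_trace_mul_nonneg
      (isHermitian_iff_isSymm.mpr ((hA.smul 1).add (hB.smul β)))).mpr fun X hX => ?_
    rw [trace_smul_add_smul_mul, one_mul]
    exact hβ X hX
  exact ⟨1, β, one_pos, (pos_and_pos_of_posSemidef hBA hAB hM (Or.inl one_pos)).2, hM⟩

theorem exists_pos_pos_of_posSemidef (hBA : ¬ Jp B ⊆ Jp A) (hAB : ¬ Jp A ⊆ Jp B)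
    {X₀ : Matrix (Fin n) (Fin n) ℝ} (hX₀ : X₀.PosDef) (ha₀ : 0 ≤ (A * X₀).trace)
    (hb₀ : 0 ≤ (B * X₀).trace) (hne : (α, β) ≠ (0, 0)) (hM : (α • A + β • B).PosSemidef) :
    ∃ α' β' : ℝ, 0 < α' ∧ 0 < β' ∧ (α' • A + β' • B).PosSemidef := by
  suffices ∃ α' β' : ℝ, (0 < α' ∨ 0 < β') ∧ (α' • A + β' • B).PosSemidef by
    obtain ⟨α', β', hpos, hM'⟩ := this
    obtain ⟨hα', hβ'⟩ := pos_and_pos_of_posSemidef hBA hAB hM' hpos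
    exact ⟨α', β', hα', hβ', hM'⟩
  by_cases hpos : 0 < α ∨ 0 < β
  · exact ⟨α, β, hpos, hM⟩
  push Not at hpos
  have h0 : α • A + β • B = 0 := by
    refine hM.eq_zero_of_trace_mul_posDef hX₀ (le_antisymm ?_ (hM.trace_mul_nonneg hX₀.posSemidef))
    rw [trace_smul_add_smul_mul]
    nlinarith
  refine ⟨-α, -β, ?_, ?_⟩
  · by_contra! h
    exact hne (Prod.ext (by linarith) (by linarith))
  · rw [neg_smul, neg_smul, ← neg_add, h0, neg_zero]
    exact PosSemidef.zero

end

theorem stmt9_general {n : ℕ} (𝓑 : Set (Matrix (Fin n) (Fin n) ℝ))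
    (hsymm : ∀ B ∈ 𝓑, B.IsSymm)
    (hA3 : ∃ X ∈ JpFam 𝓑, X.PosDef)
    (hA5 : ∀ A ∈ 𝓑, ∀ B ∈ 𝓑, A ≠ B → ¬ (Jp B ⊆ Jp A))
    (A B : Matrix (Fin n) (Fin n) ℝ) (hAmem : A ∈ 𝓑) (hBmem : B ∈ 𝓑) (hAB : A ≠ B) :
    (J0 B ⊆ Jp A ↔ Jm B ⊆ Jp A) ∧
    (Jm B ⊆ Jp A ↔ ∃ α β : ℝ, 0 < α ∧ 0 < β ∧ (α • A + β • B).PosSemidef) ∧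
    ((∃ α β : ℝ, 0 < α ∧ 0 < β ∧ (α • A + β • B).PosSemidef) ↔
      ∃ α β : ℝ, (α, β) ≠ (0, 0) ∧ (α • A + β • B).PosSemidef) := by
  have hBA := hA5 A hAmem B hBmem hAB
  have hAB' := hA5 B hBmem A hAmem hAB.symm
  obtain ⟨X₀, ⟨-, hX₀𝓑⟩, hX₀⟩ := hA3
  have h21 : Jm B ⊆ Jp A → J0 B ⊆ Jp A := fun h X hX => h ⟨hX.1, hX.2.le⟩
  have h13 := exists_posSemidef_of_J0_subset_Jp (hsymm A hAmem) (hsymm B hBmem) hBA hAB'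
  have h32 : (∃ α β : ℝ, 0 < α ∧ 0 < β ∧ (α • A + β • B).PosSemidef) → Jm B ⊆ Jp A :=
    fun ⟨_, _, hα, hβ, hM⟩ => Jm_subset_Jp_of_posSemidef hM hα hβ.le
  refine ⟨⟨fun h => h32 (h13 h), h21⟩, ⟨fun h => h13 (h21 h), h32⟩, ?_, ?_⟩
  · exact fun ⟨α, β, hα, _, hM⟩ => ⟨α, β, by simp [hα.ne'], hM⟩
  · exact fun ⟨_, _, hne, hM⟩ =>
      exists_pos_pos_of_posSemidef hBA hAB' hX₀ (hX₀𝓑 A hAmem) (hX₀𝓑 B hBmem) hne hM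

theorem stmt9 {n : ℕ} (𝓑 : Set (Matrix (Fin n) (Fin n) ℝ))
    (hsymm : ∀ B ∈ 𝓑, B.IsSymm)
    (hA3 : ∃ X ∈ JpFam 𝓑, X.PosDef)
    (hA4 : (∀ A ∈ 𝓑, ¬ A.PosSemidef) ∨ 𝓑 = {0})
    (hA5 : ∀ A ∈ 𝓑, ∀ B ∈ 𝓑, A ≠ B → ¬ (Jp B ⊆ Jp A))
    (A B : Matrix (Fin n) (Fin n) ℝ) (hAmem : A ∈ 𝓑) (hBmem : B ∈ 𝓑) (hAB : A ≠ B) :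
    (J0 B ⊆ Jp A ↔ Jm B ⊆ Jp A) ∧
    (Jm B ⊆ Jp A ↔ ∃ α β : ℝ, 0 < α ∧ 0 < β ∧ (α • A + β • B).PosSemidef) ∧
    ((∃ α β : ℝ, 0 < α ∧ 0 < β ∧ (α • A + β • B).PosSemidef) ↔
      ∃ α β : ℝ, (α, β) ≠ (0, 0) ∧ (α • A + β • B).PosSemidef) :=
  stmt9_general 𝓑 hsymm hA3 hA5 A B hAmem hBmem hAB
end
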